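/- Let V be a ℤ-graded conformal vertex algebra. The map R_V → gr_F A(V) sending a + C₂(V)_p to the symbol of a in F_p A(V)/F_{p−1} A(V) is a well-defined surjective homomorphism of graded Poisson algebras, where A(V) = V/O(V) is Zhu's algebra with filtration F_p A(V) = image of V_{≤p}, and the Poisson structure on gr_F A(V) comes from the multiplication * and commutator. -/

import Mathlib

/-- The generalized binomial coefficient `(p choose i)` for `p : ℤ`, as a complex number. -/
noncomputable def cc (p : ℤ) (i : ℕ) : ℂ :=
  (∏ k ∈ Finset.range i, ((p : ℂ) - (k : ℂ))) / (Nat.factorial i : ℂ)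

/-- A vertex algebra structure on a complex vector space `V`: a vacuum `one`,
bilinear products `nmul n a b = a_{(n)} b`, truncation, vacuum axioms, and the
Borcherds identity. -/
structure VertexAlg (V : Type*) [AddCommGroup V] [Module ℂ V] where
  one : V
  nmul : ℤ → V → V → V
  nmul_add_left : ∀ (n : ℤ) (a b c : V), nmul n (a + b) c = nmul n a c + nmul n b c
  nmul_add_right : ∀ (n : ℤ) (a b c : V), nmul n a (b + c) = nmul n a b + nmul n a c
  nmul_smul_left : ∀ (n : ℤ) (s : ℂ) (a b : V), nmul n (s • a) b = s • nmul n a b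
  nmul_smul_right : ∀ (n : ℤ) (s : ℂ) (a b : V), nmul n a (s • b) = s • nmul n a b
  one_nmul : ∀ (n : ℤ) (b : V), nmul n one b = if n = -1 then b else 0
  nmul_neg_one_one : ∀ a : V, nmul (-1) a one = a
  nmul_one : ∀ (a : V) (n : ℤ), 0 ≤ n → nmul n a one = 0
  trunc : ∀ a b : V, ∃ N : ℤ, ∀ n : ℤ, N ≤ n → nmul n a b = 0
  borcherds : ∀ (p q r : ℤ) (a b c : V),
    (∑ᶠ i : ℕ, cc p i • nmul (p + q - i) (nmul (r + i) a b) c)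
      = ∑ᶠ i : ℕ, ((-1 : ℂ) ^ i * cc r i) •
          (nmul (p + r - i) a (nmul (q + i) b c)
            - ((-1 : ℂ) ^ r) • nmul (q + r - i) b (nmul (p + i) a c))

/-- A module over a vertex algebra `(V, 𝒱)`: operators `act n a = a_{(n)}` on `M`
satisfying bilinearity, the vacuum axiom, truncation and the Borcherds identity. -/
structure VAModuleStr {V : Type*} [AddCommGroup V] [Module ℂ V] (𝒱 : VertexAlg V)
    (M : Type*) [AddCommGroup M] [Module ℂ M] where
  act : ℤ → V → M → M
  act_add_left : ∀ (n : ℤ) (a b : V) (m : M), act n (a + b) m = act n a m + act n b m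
  act_add_right : ∀ (n : ℤ) (a : V) (m m' : M), act n a (m + m') = act n a m + act n a m'
  act_smul_left : ∀ (n : ℤ) (s : ℂ) (a : V) (m : M), act n (s • a) m = s • act n a m
  act_smul_right : ∀ (n : ℤ) (s : ℂ) (a : V) (m : M), act n a (s • m) = s • act n a m
  one_act : ∀ (n : ℤ) (m : M), act n 𝒱.one m = if n = -1 then m else 0
  trunc : ∀ (a : V) (m : M), ∃ N : ℤ, ∀ n : ℤ, N ≤ n → act n a m = 0
  borcherds : ∀ (p q r : ℤ) (a b : V) (m : M),
    (∑ᶠ i : ℕ, cc p i • act (p + q - i) (𝒱.nmul (r + i) a b) m)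
      = ∑ᶠ i : ℕ, ((-1 : ℂ) ^ i * cc r i) •
          (act (p + r - i) a (act (q + i) b m)
            - ((-1 : ℂ) ^ r) • act (q + r - i) b (act (p + i) a m))

/-!
Modulo `O(V)` the divided powers `T^{(j)} y = y_{(-1-j)} 1` act on `V_w` by the scalars
`(-w choose j)`: this follows by induction from `T y + w y = y ∘ 1 ∈ O(V)`. Since the functions
`v ↦ (-v choose j)` span all polynomial functions, every `x ∈ V_p` written as `x = ∑ x_w` with
`x_w ∈ V_w` satisfies `∑ h(w) x_w ≡ h(p) x` modulo `O(V)` for every polynomial `h`; taking `h`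
to vanish at the weights above `p` discards the components of weight `> p`, although the grading
is not assumed to be direct. For a homogeneous element of `C₂(V)` the components are sums of
`a_{(-2)} b ≡ a_{(-2)} b - a ∘ b ∈ V_{≤ wt - 1}`, which gives well-definedness. For the bracket,
skew-symmetry expresses `b * a` through the `a_{(n)} b` and the `T^{(j+1)} (a_{(n+j)} b)`, and the
only such term of top weight is `T (a_{(0)} b) ≡ -(p + q - 1) a_{(0)} b`.
-/

open Function Finset

lemma cc_zero (p : ℤ) : cc p 0 = 1 := by simp [cc]

lemma cc_succ (p : ℤ) (i : ℕ) : cc p (i + 1) = cc p i * (((p : ℂ) - i) / (i + 1)) := by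
  rw [cc, cc, prod_range_succ, Nat.factorial_succ]
  push_cast
  rw [div_mul_div_comm, mul_comm ((i : ℂ) + 1)]

lemma cc_one (p : ℤ) : cc p 1 = p := by
  simp [cc]

lemma cc_zero_succ (i : ℕ) : cc 0 (i + 1) = 0 := by
  simp [cc, prod_range_succ']

lemma cc_neg_one (i : ℕ) : cc (-1) i = (-1 : ℂ) ^ i := by
  induction i with
  | zero => exact cc_zero _
  | succ i ih =>
    rw [cc_succ, ih]
    have : (i : ℂ) + 1 ≠ 0 := Nat.cast_add_one_ne_zero i
    push_cast
    field_simp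
    ring

lemma finsum_eq_sum_range_of_forall_ge {M : Type*} [AddCommMonoid M] {f : ℕ → M} {n : ℕ}
    (h : ∀ i, n ≤ i → f i = 0) : ∑ᶠ i, f i = ∑ i ∈ range n, f i :=
  finsum_eq_sum_of_support_subset f fun i hi => by
    simpa using not_le.mp fun hni => hi (h i hni)

lemma finsum_smodEq_sum_range {R M : Type*} [Ring R] [AddCommGroup M] [Module R M]
    {U : Submodule R M} {f : ℕ → M} (hf : (support f).Finite) (n : ℕ)
    (h : ∀ i, n ≤ i → f i ∈ U) : ∑ᶠ i, f i ≡ ∑ i ∈ range n, f i [SMOD U] := by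
  classical
  rw [finsum_eq_sum_of_support_subset f (s := hf.toFinset ∪ range n) (by simp),
    ← sum_sdiff subset_union_right, SModEq.sub_mem, add_sub_cancel_right]
  exact U.sum_mem fun i hi => h i (by simpa using (mem_sdiff.mp hi).2)

lemma Submodule.mkQ_mem_map_mkQ_iff {R M : Type*} [Ring R] [AddCommGroup M] [Module R M]
    (U W : Submodule R M) (x : M) : U.mkQ x ∈ W.map U.mkQ ↔ x ∈ U ⊔ W := by
  rw [← Submodule.mem_comap, Submodule.comap_map_mkQ]

section Weight

variable {V : Type*} [AddCommGroup V] [Module ℂ V] (Vd : ℤ → Submodule ℂ V)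

def weightLE (p : ℤ) : Submodule ℂ V := ⨆ d ∈ {d : ℤ | d ≤ p}, Vd d

variable {Vd}

lemma le_weightLE {d p : ℤ} (h : d ≤ p) : Vd d ≤ weightLE Vd p :=
  le_biSup Vd h

lemma weightLE_mono {p p' : ℤ} (h : p ≤ p') : weightLE Vd p ≤ weightLE Vd p' :=
  iSup₂_le fun _ hd => le_weightLE (le_trans hd h)

variable (Vd) in
lemma weightLE_eq_sup (p : ℤ) : weightLE Vd p = Vd p ⊔ weightLE Vd (p - 1) := by
  refine le_antisymm (iSup₂_le fun d (hd : d ≤ p) => ?_)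
    (sup_le (le_weightLE le_rfl) (weightLE_mono (by omega)))
  rcases hd.eq_or_lt with rfl | h
  · exact le_sup_left
  · exact le_sup_of_le_right (le_weightLE (by omega))

end Weight

def binomialSpan : Submodule ℂ (ℤ → ℂ) :=
  Submodule.span ℂ (Set.range fun (j : ℕ) (v : ℤ) => cc (-v) j)

lemma sub_mul_mem_binomialSpan (μ : ℂ) {h : ℤ → ℂ} (hh : h ∈ binomialSpan) :
    (fun v : ℤ => ((v : ℂ) - μ) * h v) ∈ binomialSpan := by
  induction hh using Submodule.span_induction with
  | mem g hg =>
    obtain ⟨j, rfl⟩ := hg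
    have hj : (j : ℂ) + 1 ≠ 0 := Nat.cast_add_one_ne_zero j
    have key : (fun v : ℤ => ((v : ℂ) - μ) * cc (-v) j)
        = (-((j : ℂ) + 1)) • (fun v : ℤ => cc (-v) (j + 1))
          + (-((j : ℂ) + μ)) • fun v : ℤ => cc (-v) j := by
      funext v
      simp only [Pi.add_apply, Pi.smul_apply, smul_eq_mul, cc_succ]
      push_cast
      field_simp
      ring
    rw [key]
    exact add_mem (Submodule.smul_mem _ _ (Submodule.subset_span ⟨j + 1, rfl⟩))
      (Submodule.smul_mem _ _ (Submodule.subset_span ⟨j, rfl⟩))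
  | zero =>
    convert zero_mem binomialSpan using 1
    funext v
    exact mul_zero _
  | add g g' _ _ hg hg' =>
    convert add_mem hg hg' using 1
    funext v
    exact mul_add _ _ _
  | smul s g _ hg =>
    convert Submodule.smul_mem _ s hg using 1
    funext v
    exact mul_left_comm _ _ _

lemma prod_sub_mem_binomialSpan (B : Finset ℤ) :
    (fun v : ℤ => ∏ m ∈ B, ((v : ℂ) - m)) ∈ binomialSpan := by
  classical
  induction B using Finset.induction with
  | empty => exact Submodule.subset_span ⟨0, funext fun v => by simp [cc_zero]⟩
  | insert m B hmB ih => simpa [prod_insert hmB] using sub_mul_mem_binomialSpan m ih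

namespace VertexAlg

variable {V : Type*} [AddCommGroup V] [Module ℂ V] (𝒱 : VertexAlg V)

lemma nmul_zero_left (n : ℤ) (b : V) : 𝒱.nmul n 0 b = 0 := by
  simpa using 𝒱.nmul_smul_left n 0 0 b

lemma nmul_zero_right (n : ℤ) (a : V) : 𝒱.nmul n a 0 = 0 := by
  simpa using 𝒱.nmul_smul_right n 0 a 0

lemma finite_support_nmul {M : Type*} [Zero M] (g : ℕ → V → M) (hg : ∀ i, g i 0 = 0)
    (a b : V) (m : ℕ → ℤ) (k : ℤ) (hm : ∀ i : ℕ, k + i ≤ m i) :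
    (support fun i => g i (𝒱.nmul (m i) a b)).Finite := by
  obtain ⟨N, hN⟩ := 𝒱.trunc a b
  refine (Set.finite_lt_nat (N - k).toNat).subset fun i hi =>
    show i < _ from not_le.mp fun hle => hi ?_
  have := hm i
  change g i (𝒱.nmul (m i) a b) = 0
  rw [hN (m i) (by omega), hg]

/-- The divided power `T^{(j)} = T^j / j!` of the translation operator,
`T^{(j)} y = y_{(-1-j)} 1`. -/
def translDivPow (j : ℕ) : V →ₗ[ℂ] V where
  toFun y := 𝒱.nmul (-1 - j) y 𝒱.one
  map_add' y z := 𝒱.nmul_add_left _ y z 𝒱.one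
  map_smul' s y := 𝒱.nmul_smul_left _ s y 𝒱.one

@[simp] lemma translDivPow_apply (j : ℕ) (y : V) :
    𝒱.translDivPow j y = 𝒱.nmul (-1 - j) y 𝒱.one := rfl

lemma translDivPow_zero_apply (y : V) : 𝒱.translDivPow 0 y = y := by
  simpa using 𝒱.nmul_neg_one_one y

lemma translDivPow_one_translDivPow (j : ℕ) (y : V) :
    𝒱.translDivPow 1 (𝒱.translDivPow j y) = ((j : ℂ) + 1) • 𝒱.translDivPow (j + 1) y := by
  have H := 𝒱.borcherds 0 (-2) (-1 - j) y 𝒱.one 𝒱.one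
  rw [finsum_eq_sum_range_of_forall_ge (n := 1), finsum_eq_sum_range_of_forall_ge (n := 2)] at H
  · simpa [sum_range_succ, cc_zero, cc_one, 𝒱.one_nmul, 𝒱.nmul_one, nmul_zero_right, sub_sub,
      add_comm (1 : ℤ)] using H
  · intro i hi
    rw [𝒱.nmul_one y _ (by omega), 𝒱.nmul_zero_right, 𝒱.one_nmul, if_neg (by omega)]
    simp [nmul_zero_right]
  · intro i hi
    obtain ⟨i, rfl⟩ := Nat.exists_eq_add_of_le' hi
    rw [cc_zero_succ, zero_smul]

lemma nmul_sub_neg_one_zpow_smul_nmul_swap (n : ℤ) (a b : V) :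
    𝒱.nmul (n - 1) a b - (-1 : ℂ) ^ n • 𝒱.nmul (n - 1) b a
      = ∑ᶠ j : ℕ, (-1 : ℂ) ^ j • 𝒱.translDivPow (j + 1) (𝒱.nmul (n + j) a b) := by
  have H := 𝒱.borcherds (-1) (-1) n a b 𝒱.one
  rw [finsum_eq_sum_range_of_forall_ge (f := fun i : ℕ => ((-1 : ℂ) ^ i * cc n i) • _) (n := 1)]
    at H
  · rw [sum_range_one] at H
    convert H.symm using 1
    · simp [cc_zero, 𝒱.nmul_neg_one_one, neg_add_eq_sub]
    · refine finsum_congr fun j => ?_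
      rw [cc_neg_one, translDivPow_apply]
      congr 2
      push_cast
      ring
  · intro i hi
    rw [𝒱.nmul_one a _ (by omega), 𝒱.nmul_one b _ (by omega), 𝒱.nmul_zero_right,
      𝒱.nmul_zero_right]
    simp

variable (Vd : ℤ → Submodule ℂ V)

structure IsWeightGrading : Prop where
  one_mem : 𝒱.one ∈ Vd 0
  nmul_mem {d e : ℤ} (n : ℤ) {a b : V} : a ∈ Vd d → b ∈ Vd e → 𝒱.nmul n a b ∈ Vd (d + e - n - 1)

def zhuO : Submodule ℂ V :=
  Submodule.span ℂ {y : V | ∃ (d : ℤ) (a b : V), a ∈ Vd d ∧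
    y = ∑ᶠ i : ℕ, cc d i • 𝒱.nmul ((i : ℤ) - 2) a b}

-- `d` stands for `wt a`.
noncomputable def zhuMul (d : ℤ) (a b : V) : V := ∑ᶠ i : ℕ, cc d i • 𝒱.nmul ((i : ℤ) - 1) a b

def C₂ : Submodule ℂ V := Submodule.span ℂ {y : V | ∃ a b : V, y = 𝒱.nmul (-2) a b}

variable {Vd}

lemma finsum_mem_zhuO {d : ℤ} {a : V} (ha : a ∈ Vd d) (b : V) :
    ∑ᶠ i : ℕ, cc d i • 𝒱.nmul ((i : ℤ) - 2) a b ∈ zhuO 𝒱 Vd :=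
  Submodule.subset_span ⟨d, a, b, ha, rfl⟩

lemma translDivPow_one_smodEq {w : ℤ} {y : V} (hy : y ∈ Vd w) :
    𝒱.translDivPow 1 y ≡ -(w : ℂ) • y [SMOD zhuO 𝒱 Vd] := by
  have h := 𝒱.finsum_mem_zhuO hy 𝒱.one
  rw [finsum_eq_sum_range_of_forall_ge (n := 2)] at h
  · rw [SModEq.sub_mem]
    simpa [sum_range_succ, cc_zero, cc_one, 𝒱.nmul_neg_one_one] using h
  · intro i hi
    rw [𝒱.nmul_one y _ (by omega), smul_zero]

variable {𝒱}

lemma IsWeightGrading.translDivPow_mem (hV : 𝒱.IsWeightGrading Vd) {w : ℤ} {y : V}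
    (hy : y ∈ Vd w) (j : ℕ) : 𝒱.translDivPow j y ∈ Vd (w + j) := by
  have h := hV.nmul_mem (-1 - j) hy hV.one_mem
  rwa [show w + 0 - (-1 - j) - 1 = w + j by ring] at h

lemma IsWeightGrading.translDivPow_smodEq (hV : 𝒱.IsWeightGrading Vd) {w : ℤ} {y : V}
    (hy : y ∈ Vd w) (j : ℕ) : 𝒱.translDivPow j y ≡ cc (-w) j • y [SMOD zhuO 𝒱 Vd] := by
  induction j with
  | zero => rw [translDivPow_zero_apply, cc_zero, one_smul]
  | succ j ih =>
    have hj : (j : ℂ) + 1 ≠ 0 := Nat.cast_add_one_ne_zero j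
    have h := 𝒱.translDivPow_one_smodEq (hV.translDivPow_mem hy j)
    rw [translDivPow_one_translDivPow] at h
    have := (h.trans (ih.smul _)).smul ((j : ℂ) + 1)⁻¹
    rw [smul_smul, inv_mul_cancel₀ hj, one_smul, smul_smul, smul_smul] at this
    convert this using 2
    rw [cc_succ]
    push_cast
    field_simp
    ring

lemma IsWeightGrading.translDivPow_mem_zhuO_sup (hV : 𝒱.IsWeightGrading Vd) {w t : ℤ} {y : V}
    (hy : y ∈ Vd w) (hw : w ≤ t) (j : ℕ) :
    𝒱.translDivPow j y ∈ zhuO 𝒱 Vd ⊔ weightLE Vd t := by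
  rw [← sub_add_cancel (𝒱.translDivPow j y) (cc (-w) j • y)]
  exact Submodule.add_mem_sup (SModEq.sub_mem.mp (hV.translDivPow_smodEq hy j))
    (Submodule.smul_mem _ _ (le_weightLE hw hy))

lemma IsWeightGrading.nmul_mem_weightLE (hV : 𝒱.IsWeightGrading Vd) {d e t : ℤ} (n : ℤ)
    {a b : V} (ha : a ∈ Vd d) (hb : b ∈ Vd e) (h : d + e - n - 1 ≤ t) :
    𝒱.nmul n a b ∈ weightLE Vd t :=
  le_weightLE h (hV.nmul_mem n ha hb)

lemma IsWeightGrading.nmul_neg_two_mem (hV : 𝒱.IsWeightGrading Vd) {d e : ℤ} {a b : V}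
    (ha : a ∈ Vd d) (hb : b ∈ Vd e) : 𝒱.nmul (-2) a b ∈ zhuO 𝒱 Vd ⊔ weightLE Vd (d + e) := by
  have hmod : ∑ᶠ i : ℕ, cc d i • 𝒱.nmul ((i : ℤ) - 2) a b ≡ 𝒱.nmul (-2) a b
      [SMOD weightLE Vd (d + e)] := by
    have hfin := 𝒱.finite_support_nmul (fun i y => cc d i • y) (fun _ => smul_zero _) a b
      (fun i => (i : ℤ) - 2) (-2) fun i => by omega
    simpa [cc_zero] using finsum_smodEq_sum_range (U := weightLE Vd (d + e)) hfin 1 fun i hi =>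
      Submodule.smul_mem _ _ (hV.nmul_mem_weightLE ((i : ℤ) - 2) ha hb (by omega))
  rw [← sub_sub_cancel (∑ᶠ i : ℕ, cc d i • 𝒱.nmul ((i : ℤ) - 2) a b) (𝒱.nmul (-2) a b)]
  exact Submodule.sub_mem _ (Submodule.mem_sup_left (𝒱.finsum_mem_zhuO ha b))
    (Submodule.mem_sup_right (SModEq.sub_mem.mp hmod))

lemma IsWeightGrading.zhuMul_smodEq_sum_range (hV : 𝒱.IsWeightGrading Vd) {p q : ℤ} {a b : V}
    (ha : a ∈ Vd p) (hb : b ∈ Vd q) (n : ℕ) :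
    𝒱.zhuMul p a b ≡ ∑ i ∈ range n, cc p i • 𝒱.nmul ((i : ℤ) - 1) a b
      [SMOD weightLE Vd (p + q - n)] :=
  finsum_smodEq_sum_range (𝒱.finite_support_nmul (fun i y => cc p i • y) (fun _ => smul_zero _)
    a b (fun i => (i : ℤ) - 1) (-1) fun i => by omega) n fun i hi =>
      Submodule.smul_mem _ _ (hV.nmul_mem_weightLE ((i : ℤ) - 1) ha hb (by omega))

lemma IsWeightGrading.sum_smul_sub_smul_mem_zhuO (hV : 𝒱.IsWeightGrading Vd) {p : ℤ} {x : V}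
    (hx : x ∈ Vd p) {K : Finset ℤ} {f : ℤ → V} (hf : ∀ w, f w ∈ Vd w)
    (hsum : ∑ w ∈ K, f w = x) {h : ℤ → ℂ} (hh : h ∈ binomialSpan) :
    ∑ w ∈ K, h w • f w - h p • x ∈ zhuO 𝒱 Vd := by
  let Φ : (ℤ → ℂ) →ₗ[ℂ] V :=
    ∑ w ∈ K, (LinearMap.proj w).smulRight (f w) - (LinearMap.proj p).smulRight x
  have hΦ : ∀ h, Φ h = ∑ w ∈ K, h w • f w - h p • x := by
    intro h
    simp [Φ]
  suffices binomialSpan ≤ (zhuO 𝒱 Vd).comap Φ by simpa [hΦ] using this hh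
  refine Submodule.span_le.mpr ?_
  rintro _ ⟨j, rfl⟩
  rw [SetLike.mem_coe, Submodule.mem_comap, hΦ, ← SModEq.sub_mem]
  calc ∑ w ∈ K, cc (-w) j • f w
      ≡ ∑ w ∈ K, 𝒱.translDivPow j (f w) [SMOD zhuO 𝒱 Vd] :=
        SModEq.sum fun w _ => (hV.translDivPow_smodEq (hf w) j).symm
    _ = 𝒱.translDivPow j x := by rw [← map_sum, hsum]
    _ ≡ cc (-p) j • x [SMOD zhuO 𝒱 Vd] := hV.translDivPow_smodEq hx j

lemma IsWeightGrading.mem_zhuO_sup_weightLE (hV : 𝒱.IsWeightGrading Vd) {p : ℤ} {x : V}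
    (hx : x ∈ Vd p) (hx' : x ∈ ⨆ w, Vd w ⊓ (zhuO 𝒱 Vd ⊔ weightLE Vd (w - 1))) :
    x ∈ zhuO 𝒱 Vd ⊔ weightLE Vd (p - 1) := by
  classical
  obtain ⟨f, hf, hsum⟩ := (Submodule.mem_iSup_iff_exists_finsupp _ x).mp hx'
  set B := f.support.filter (p < ·)
  set h : ℤ → ℂ := fun v => ∏ m ∈ B, ((v : ℂ) - m)
  have hp : h p ≠ 0 := prod_ne_zero_iff.mpr fun m hm =>
    sub_ne_zero.mpr (by exact_mod_cast (mem_filter.mp hm).2.ne)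
  have hO := hV.sum_smul_sub_smul_mem_zhuO hx (fun w => (hf w).1) hsum
    (prod_sub_mem_binomialSpan B)
  have hlow : ∑ w ∈ f.support, h w • f w ∈ zhuO 𝒱 Vd ⊔ weightLE Vd (p - 1) := by
    refine Submodule.sum_mem _ fun w hw => ?_
    by_cases hwB : w ∈ B
    · rw [show h w = 0 from prod_eq_zero hwB (sub_self _), zero_smul]
      exact zero_mem _
    · have hwp : w ≤ p := by simpa [B, hw] using hwB
      have hle := sup_le_sup_left (weightLE_mono (Vd := Vd) (show w - 1 ≤ p - 1 by omega))
        (zhuO 𝒱 Vd)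
      exact Submodule.smul_mem _ _ (hle (hf w).2)
  rw [← Submodule.smul_mem_iff _ hp, ← sub_sub_cancel (∑ w ∈ f.support, h w • f w) (h p • x)]
  exact Submodule.sub_mem _ hlow (Submodule.mem_sup_left hO)

lemma IsWeightGrading.C₂_le_iSup (hV : 𝒱.IsWeightGrading Vd) (htop : ⨆ d, Vd d = ⊤) :
    𝒱.C₂ ≤ ⨆ w, Vd w ⊓ (zhuO 𝒱 Vd ⊔ weightLE Vd (w - 1)) := by
  set W := ⨆ w, Vd w ⊓ (zhuO 𝒱 Vd ⊔ weightLE Vd (w - 1))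
  have hVd : ∀ y : V, y ∈ ⨆ d, Vd d := fun y => htop ▸ Submodule.mem_top
  refine Submodule.span_le.mpr ?_
  rintro _ ⟨a, b, rfl⟩
  refine Submodule.iSup_induction Vd (motive := fun a => 𝒱.nmul (-2) a b ∈ W) (hVd a)
    (fun d a ha => ?_) (by simp [nmul_zero_left])
    (fun a a' ha ha' => by simpa [nmul_add_left] using add_mem ha ha')
  refine Submodule.iSup_induction Vd (motive := fun b => 𝒱.nmul (-2) a b ∈ W) (hVd b)
    (fun e b hb => ?_) (by simp [nmul_zero_right])
    (fun b b' hb hb' => by simpa [nmul_add_right] using add_mem hb hb')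
  refine Submodule.mem_iSup_of_mem (d + e + 1) ⟨?_, ?_⟩
  · simpa [sub_eq_add_neg, add_assoc] using hV.nmul_mem (-2) ha hb
  · simpa using hV.nmul_neg_two_mem ha hb

lemma IsWeightGrading.C₂_inf_le (hV : 𝒱.IsWeightGrading Vd) (htop : ⨆ d, Vd d = ⊤) (p : ℤ) :
    𝒱.C₂ ⊓ Vd p ≤ zhuO 𝒱 Vd ⊔ weightLE Vd (p - 1) :=
  fun _ hx => hV.mem_zhuO_sup_weightLE hx.2 (hV.C₂_le_iSup htop hx.1)

lemma IsWeightGrading.zhuMul_sub_nmul_neg_one_mem (hV : 𝒱.IsWeightGrading Vd) {p q : ℤ}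
    {a b : V} (ha : a ∈ Vd p) (hb : b ∈ Vd q) :
    𝒱.zhuMul p a b - 𝒱.nmul (-1) a b ∈ weightLE Vd (p + q - 1) := by
  simpa [SModEq.sub_mem, cc_zero] using hV.zhuMul_smodEq_sum_range ha hb 1

lemma IsWeightGrading.zhuMul_sub_zhuMul_sub_nmul_zero_mem (hV : 𝒱.IsWeightGrading Vd)
    {p q : ℤ} {a b : V} (ha : a ∈ Vd p) (hb : b ∈ Vd q) :
    𝒱.zhuMul p a b - 𝒱.zhuMul q b a - 𝒱.nmul 0 a b ∈ zhuO 𝒱 Vd ⊔ weightLE Vd (p + q - 2) := by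
  set G := zhuO 𝒱 Vd ⊔ weightLE Vd (p + q - 2)
  set S : ℤ → V := fun n =>
    ∑ᶠ j : ℕ, (-1 : ℂ) ^ j • 𝒱.translDivPow (j + 1) (𝒱.nmul (n + j) a b)
  have hS_smodEq (n : ℤ) (k : ℕ) (hk : 1 ≤ n + k) :
      S n ≡ ∑ j ∈ range k, (-1 : ℂ) ^ j • 𝒱.translDivPow (j + 1) (𝒱.nmul (n + j) a b)
        [SMOD G] :=
    finsum_smodEq_sum_range (𝒱.finite_support_nmul
      (fun j y => (-1 : ℂ) ^ j • 𝒱.translDivPow (j + 1) y) (fun j => by rw [map_zero, smul_zero])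
      a b _ n fun _ => le_rfl) k fun j hj => Submodule.smul_mem _ _
        (hV.translDivPow_mem_zhuO_sup (hV.nmul_mem (n + j) ha hb) (by omega) _)
  have hS0 : S 0 ≡ -((p + q - 1 : ℤ) : ℂ) • 𝒱.nmul 0 a b [SMOD G] := by
    refine (hS_smodEq 0 1 le_rfl).trans ?_
    convert (𝒱.translDivPow_one_smodEq (hV.nmul_mem 0 ha hb)).mono le_sup_left using 2 <;> simp
  have hS1 : S 1 ≡ 0 [SMOD G] := by simpa using hS_smodEq 1 0 le_rfl
  have hskew0 : 𝒱.nmul (-1) b a = 𝒱.nmul (-1) a b - S 0 := by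
    rw [← show _ = S 0 from 𝒱.nmul_sub_neg_one_zpow_smul_nmul_swap 0 a b]
    simp
  have hskew1 : 𝒱.nmul 0 b a = S 1 - 𝒱.nmul 0 a b := by
    rw [← show _ = S 1 from 𝒱.nmul_sub_neg_one_zpow_smul_nmul_swap 1 a b]
    simp
  have hab := (hV.zhuMul_smodEq_sum_range ha hb 2).mono (le_sup_right (a := zhuO 𝒱 Vd))
  have hba := (hV.zhuMul_smodEq_sum_range hb ha 2).mono
    (le_sup_of_le_right (a := zhuO 𝒱 Vd) (weightLE_mono (show q + p - 2 ≤ p + q - 2 by omega)))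
  rw [← SModEq.zero]
  calc 𝒱.zhuMul p a b - 𝒱.zhuMul q b a - 𝒱.nmul 0 a b
      ≡ (𝒱.nmul (-1) a b + (p : ℂ) • 𝒱.nmul 0 a b)
        - (𝒱.nmul (-1) b a + (q : ℂ) • 𝒱.nmul 0 b a) - 𝒱.nmul 0 a b [SMOD G] := by
        simpa [sum_range_succ, cc_zero, cc_one] using (hab.sub hba).sub SModEq.rfl
    _ = S 0 - (q : ℂ) • S 1 + ((p + q - 1 : ℤ) : ℂ) • 𝒱.nmul 0 a b := by
        rw [hskew0, hskew1]
        push_cast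
        module
    _ ≡ -((p + q - 1 : ℤ) : ℂ) • 𝒱.nmul 0 a b - (q : ℂ) • 0
        + ((p + q - 1 : ℤ) : ℂ) • 𝒱.nmul 0 a b [SMOD G] :=
        (hS0.sub (hS1.smul _)).add SModEq.rfl
    _ = 0 := by module

end VertexAlg

/-- For a ℤ-graded conformal vertex algebra `V` (grading `Vd` by
conformal weight, compatible with the products), the map
`R_V → gr_F A(V)`, `a + C₂(V)_p ↦ symbol of a in F_p A(V)/F_{p-1} A(V)`,
is a well-defined surjective homomorphism of graded Poisson algebras.  Here
`A(V) = V/O(V)` is Zhu's algebra with Zhu product `*` and weight filtration `F`, and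
the Poisson structure on `gr_F A(V)` comes from `*` and its commutator.
This is expressed by:
(1) `C₂(V) ∩ V_p` maps into `F_{p-1} A(V)` (well-definedness);
(2) the image of `V_p` together with `F_{p-1} A(V)` is all of `F_p A(V)` (surjectivity);
(3) modulo `F_{p+q-1}`, the Zhu product `a * b` of `a ∈ V_p`, `b ∈ V_q` agrees with
    `a_{(-1)} b` (multiplicativity);
(4) modulo `F_{p+q-2}`, the commutator `a * b - b * a` agrees with `a_{(0)} b`
    (compatibility of the Poisson brackets). -/
theorem stmt11 {V : Type*} [AddCommGroup V] [Module ℂ V] (𝒱 : VertexAlg V)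
    (Vd : ℤ → Submodule ℂ V)
    (htop : (⨆ d, Vd d) = ⊤)
    (hone : 𝒱.one ∈ Vd 0)
    (hgr : ∀ (d e n : ℤ) (a b : V), a ∈ Vd d → b ∈ Vd e →
      𝒱.nmul n a b ∈ Vd (d + e - n - 1))
    (C2V : Submodule ℂ V)
    (hC2V : C2V = Submodule.span ℂ {y : V | ∃ a b : V, y = 𝒱.nmul (-2) a b})
    (OV : Submodule ℂ V)
    (hOV : OV = Submodule.span ℂ {y : V | ∃ (d : ℤ) (a b : V), a ∈ Vd d ∧
      y = ∑ᶠ i : ℕ, cc d i • 𝒱.nmul ((i : ℤ) - 2) a b})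
    (zmul : ℤ → V → V → V)
    (hzmul : ∀ (d : ℤ) (a b : V),
      zmul d a b = ∑ᶠ i : ℕ, cc d i • 𝒱.nmul ((i : ℤ) - 1) a b)
    (F : ℤ → Submodule ℂ (V ⧸ OV))
    (hFdef : ∀ p : ℤ, F p = Submodule.map OV.mkQ (⨆ d ∈ {d : ℤ | d ≤ p}, Vd d)) :
    (∀ p : ℤ, Submodule.map OV.mkQ (C2V ⊓ Vd p) ≤ F (p - 1)) ∧
    (∀ p : ℤ, Submodule.map OV.mkQ (Vd p) ⊔ F (p - 1) = F p) ∧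
    (∀ (p q : ℤ) (a b : V), a ∈ Vd p → b ∈ Vd q →
      OV.mkQ (zmul p a b - 𝒱.nmul (-1) a b) ∈ F (p + q - 1)) ∧
    (∀ (p q : ℤ) (a b : V), a ∈ Vd p → b ∈ Vd q →
      OV.mkQ (zmul p a b - zmul q b a - 𝒱.nmul 0 a b) ∈ F (p + q - 2)) := by
  obtain rfl : C2V = 𝒱.C₂ := hC2V
  obtain rfl : OV = 𝒱.zhuO Vd := hOV
  obtain rfl : zmul = 𝒱.zhuMul := funext fun d => funext fun a => funext (hzmul d a)
  obtain rfl : F = fun p => (weightLE Vd p).map (𝒱.zhuO Vd).mkQ := funext hFdef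
  have hV : 𝒱.IsWeightGrading Vd := ⟨hone, fun n _ _ => hgr _ _ n _ _⟩
  refine ⟨fun p => ?_, fun p => ?_, fun p q a b ha hb => ?_, fun p q a b ha hb => ?_⟩ <;> dsimp only
  · rw [Submodule.map_le_iff_le_comap, Submodule.comap_map_mkQ]
    exact hV.C₂_inf_le htop p
  · rw [← Submodule.map_sup, ← weightLE_eq_sup]
  · exact (Submodule.mkQ_mem_map_mkQ_iff _ _ _).mpr
      (Submodule.mem_sup_right (hV.zhuMul_sub_nmul_neg_one_mem ha hb))
  · exact (Submodule.mkQ_mem_map_mkQ_iff _ _ _).mpr (hV.zhuMul_sub_zhuMul_sub_nmul_zero_mem ha hb)
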